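/- arXiv:1702.04530 — 4 statements merged into one kernel-verified Lean document; each statement's English description precedes it below -/
import Mathlib

section
/- Let n ≥ 2 be an integer, let α, β ∈ ℝ with α + β > 0, and let c ∈ ℝ^{n−1}. Then there exist δ ∈ (0, π/2) and η ∈ (0, π/2) such that for all λ ∈ S_{π/2+η} and all z = (z_1,…,z_{n−1}) with each z_k ∈ Σ_δ, one has: λ ≠ 0, (α+β)|z|_− − c·z ≠ 0, and λ + (α+β)|z|_− − c·z ≠ 0. (This says that every γ-principal part of the symbol P(λ,z) = λ + α|z|_− + β√(λ+|z|_−²) − c·z is nonvanishing on the product of sectors, i.e. P is N-parabolic.) -/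
open Complex Real Set

/-- The sector `S_κ = {r e^{iφ} : r > 0, |φ| < κ}` in the complex plane. -/
def sectorS (κ : ℝ) : Set ℂ :=
  {w | ∃ r φ : ℝ, 0 < r ∧ |φ| < κ ∧ w = (r : ℂ) * Complex.exp ((φ : ℂ) * Complex.I)}

/-- The sector `Σ_δ = {r e^{iφ} : r ∈ ℝ \ {0}, |φ - π/2| < δ}` in the complex plane. -/
def sectorSigma (δ : ℝ) : Set ℂ :=
  {w | ∃ r φ : ℝ, r ≠ 0 ∧ |φ - π / 2| < δ ∧ w = (r : ℂ) * Complex.exp ((φ : ℂ) * Complex.I)}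

/-- `|z|_- = √(-∑ z_k²)`, using the principal branch of the square root
(`w ^ (1/2) = exp((1/2) log w)` with `arg ∈ (-π, π]`). -/
noncomputable def zMinus {m : ℕ} (z : Fin m → ℂ) : ℂ :=
  (-(∑ k, (z k) ^ 2)) ^ ((1 : ℂ) / 2)

/-- `c·z = ∑ c_k z_k`. -/
noncomputable def cDot {m : ℕ} (c : Fin m → ℝ) (z : Fin m → ℂ) : ℂ :=
  ∑ k, (c k : ℂ) * z k

/-!
Writing `z_k = i ρ_k e^{i t_k}` with `|t_k| < δ`, one gets `-z_k² = ρ_k² e^{2 i t_k}`, so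
`w = -∑ z_k²` satisfies `Re w ≥ (1 - 2δ²) s²` and `‖w‖ ≤ s²`, where `s² = ∑ ‖z_k‖²`. Hence
`|z|_- = √w` has real part at least `s / 2` and imaginary part at most `δ s`, while `c·z` has
real part at most `δ ‖c‖₁ s`. Once `δ ‖c‖₁ ≤ (α + β) / 4`, the value `W = (α + β)|z|_- - c·z`
lies in the cone `Re W ≥ A s`, `|Im W| ≤ B s` (with `s > 0`, `A = (α + β) / 4`,
`B = α + β + ‖c‖₁`), which is disjoint from `-S_{π/2+η}` as soon as `B sin η < A cos η`.
-/

open Filter Topology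

section SectorSigma

variable {δ : ℝ} {u : ℂ}

lemma exists_eq_mul_I_mul_exp_of_mem_sectorSigma (hu : u ∈ sectorSigma δ) :
    ∃ ρ t : ℝ, ρ ≠ 0 ∧ |t| < δ ∧ u = ρ * I * exp (t * I) := by
  obtain ⟨r, φ, hr, hφ, rfl⟩ := hu
  refine ⟨r, φ - π / 2, hr, hφ, ?_⟩
  rw [mul_assoc, ofReal_sub, sub_mul, Complex.exp_sub, ofReal_div, ofReal_ofNat,
    exp_pi_div_two_mul_I]
  field_simp

lemma ne_zero_of_mem_sectorSigma (hu : u ∈ sectorSigma δ) : u ≠ 0 := by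
  obtain ⟨ρ, t, hρ, -, rfl⟩ := exists_eq_mul_I_mul_exp_of_mem_sectorSigma hu
  simp [hρ, Complex.exp_ne_zero]

lemma abs_re_le_of_mem_sectorSigma (hu : u ∈ sectorSigma δ) : |u.re| ≤ δ * ‖u‖ := by
  obtain ⟨ρ, t, -, ht, rfl⟩ := exists_eq_mul_I_mul_exp_of_mem_sectorSigma hu
  have hre : (ρ * I * exp (t * I)).re = -(ρ * Real.sin t) := by
    simp [exp_ofReal_mul_I_re, exp_ofReal_mul_I_im]
  have hnorm : ‖(ρ : ℂ) * I * exp (t * I)‖ = |ρ| := by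
    simp [norm_exp_ofReal_mul_I]
  rw [hre, hnorm, abs_neg, abs_mul, mul_comm δ]
  exact mul_le_mul_of_nonneg_left (abs_sin_le_abs.trans ht.le) (abs_nonneg ρ)

lemma re_neg_sq_ge_of_mem_sectorSigma (hu : u ∈ sectorSigma δ) :
    (1 - 2 * δ ^ 2) * ‖u‖ ^ 2 ≤ (-u ^ 2).re := by
  obtain ⟨ρ, t, -, ht, rfl⟩ := exists_eq_mul_I_mul_exp_of_mem_sectorSigma hu
  have hsq : -((ρ : ℂ) * I * exp (t * I)) ^ 2 =
      ((ρ ^ 2 : ℝ) : ℂ) * exp (((2 * t : ℝ) : ℂ) * I) := by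
    rw [mul_pow, mul_pow, I_sq, ← Complex.exp_nat_mul]
    push_cast; ring_nf
  have hnorm : ‖(ρ : ℂ) * I * exp (t * I)‖ = |ρ| := by
    simp [norm_exp_ofReal_mul_I]
  rw [hsq, re_ofReal_mul, exp_ofReal_mul_I_re, hnorm, sq_abs]
  have hcos : 1 - (2 * t) ^ 2 / 2 ≤ Real.cos (2 * t) := one_sub_sq_div_two_le_cos
  have ht2 : t ^ 2 ≤ δ ^ 2 := sq_le_sq' (abs_lt.1 ht).1.le (abs_lt.1 ht).2.le
  nlinarith [sq_nonneg ρ]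

end SectorSigma

lemma sqrt_re_le_re_cpow_half (w : ℂ) : √w.re ≤ (w ^ (1 / 2 : ℂ)).re := by
  rw [one_div, cpow_inv_two_re]
  exact Real.sqrt_le_sqrt (by linarith [re_le_norm w])

lemma abs_im_cpow_half_le {w : ℂ} {S δ : ℝ} (hδ : 0 ≤ δ) (hw : ‖w‖ ≤ S)
    (hre : (1 - 2 * δ ^ 2) * S ≤ w.re) : |(w ^ (1 / 2 : ℂ)).im| ≤ δ * √S := by
  rw [one_div, abs_cpow_inv_two_im, ← Real.sqrt_sq hδ, ← Real.sqrt_mul (sq_nonneg δ)]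
  exact Real.sqrt_le_sqrt (by linarith)

lemma norm_le_sqrt_sum_sq {m : ℕ} (z : Fin m → ℂ) (k : Fin m) : ‖z k‖ ≤ √(∑ j, ‖z j‖ ^ 2) :=
  Real.le_sqrt_of_sq_le (Finset.single_le_sum (f := fun j => ‖z j‖ ^ 2)
    (fun _ _ => sq_nonneg _) (Finset.mem_univ k))

lemma norm_neg_sum_sq_le {m : ℕ} (z : Fin m → ℂ) : ‖-∑ k, z k ^ 2‖ ≤ ∑ k, ‖z k‖ ^ 2 := by
  rw [norm_neg]
  exact (norm_sum_le _ _).trans_eq (by simp only [norm_pow])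

section Symbol

variable {m : ℕ} {δ : ℝ} {z : Fin m → ℂ}

lemma re_neg_sum_sq_ge (hz : ∀ k, z k ∈ sectorSigma δ) :
    (1 - 2 * δ ^ 2) * ∑ k, ‖z k‖ ^ 2 ≤ (-∑ k, z k ^ 2).re := by
  rw [← Finset.sum_neg_distrib, re_sum, Finset.mul_sum]
  exact Finset.sum_le_sum fun k _ => re_neg_sq_ge_of_mem_sectorSigma (hz k)

lemma re_zMinus_ge (hδ0 : 0 ≤ δ) (hδ : δ ≤ 1 / 2) (hz : ∀ k, z k ∈ sectorSigma δ) :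
    √(∑ k, ‖z k‖ ^ 2) / 2 ≤ (zMinus z).re := by
  have hS : 0 ≤ ∑ k, ‖z k‖ ^ 2 := Finset.sum_nonneg fun _ _ => sq_nonneg _
  have hδ2 : δ ^ 2 ≤ 1 / 4 := by nlinarith
  have hre := re_neg_sum_sq_ge hz
  calc √(∑ k, ‖z k‖ ^ 2) / 2 = √((∑ k, ‖z k‖ ^ 2) / 4) := by
        rw [Real.sqrt_div' _ (by norm_num : (0 : ℝ) ≤ 4),
          show (4 : ℝ) = 2 ^ 2 by norm_num, Real.sqrt_sq zero_le_two]
    _ ≤ √(-∑ k, z k ^ 2).re := Real.sqrt_le_sqrt (by nlinarith)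
    _ ≤ (zMinus z).re := sqrt_re_le_re_cpow_half _

lemma abs_im_zMinus_le (hδ : 0 ≤ δ) (hz : ∀ k, z k ∈ sectorSigma δ) :
    |(zMinus z).im| ≤ δ * √(∑ k, ‖z k‖ ^ 2) :=
  abs_im_cpow_half_le hδ (norm_neg_sum_sq_le z) (re_neg_sum_sq_ge hz)

lemma abs_re_cDot_le (c : Fin m → ℝ) {ε : ℝ} (hz : ∀ k, |(z k).re| ≤ ε) :
    |(cDot c z).re| ≤ (∑ k, |c k|) * ε := by
  rw [cDot, re_sum, Finset.sum_mul]
  refine (Finset.abs_sum_le_sum_abs _ _).trans (Finset.sum_le_sum fun k _ => ?_)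
  rw [re_ofReal_mul, abs_mul]
  exact mul_le_mul_of_nonneg_left (hz k) (abs_nonneg _)

lemma norm_cDot_le (c : Fin m → ℝ) {s : ℝ} (hz : ∀ k, ‖z k‖ ≤ s) :
    ‖cDot c z‖ ≤ (∑ k, |c k|) * s := by
  rw [cDot, Finset.sum_mul]
  refine (norm_sum_le _ _).trans (Finset.sum_le_sum fun k _ => ?_)
  rw [norm_mul, norm_real, Real.norm_eq_abs]
  exact mul_le_mul_of_nonneg_left (hz k) (abs_nonneg _)

end Symbol

lemma ne_zero_of_mem_sectorS {κ : ℝ} {lam : ℂ} (h : lam ∈ sectorS κ) : lam ≠ 0 := by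
  obtain ⟨r, φ, hr, -, rfl⟩ := h
  exact mul_ne_zero (ofReal_ne_zero.2 hr.ne') (Complex.exp_ne_zero _)

lemma exists_mul_sin_lt_mul_cos {A : ℝ} (hA : 0 < A) (B : ℝ) :
    ∃ η ∈ Ioo 0 (π / 2), B * Real.sin η < A * Real.cos η := by
  have hcont : ContinuousAt (fun η => B * Real.sin η - A * Real.cos η) 0 := by fun_prop
  have hneg : ∀ᶠ η in 𝓝[>] 0, B * Real.sin η - A * Real.cos η < 0 :=
    nhdsWithin_le_nhds (hcont.eventually (gt_mem_nhds (by simpa using hA)))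
  obtain ⟨η, hη, hηI⟩ := (hneg.and (Ioo_mem_nhdsGT pi_div_two_pos)).exists
  exact ⟨η, hηI, by linarith⟩

lemma add_ne_zero_of_mem_sectorS {η : ℝ} (hη0 : 0 ≤ η) (hη : η < π / 2) {lam W : ℂ}
    (hlam : lam ∈ sectorS (π / 2 + η)) (hW : |W.im| * Real.sin η < W.re * Real.cos η) :
    lam + W ≠ 0 := by
  obtain ⟨r, φ, hr, hφ, rfl⟩ := hlam
  have hsin : 0 ≤ Real.sin η := sin_nonneg_of_nonneg_of_le_pi hη0 (by linarith [pi_pos])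
  -- this is `cos (|φ| - η)`, and `||φ| - η| < π / 2`
  have hpos : 0 < Real.cos φ * Real.cos η + |Real.sin φ| * Real.sin η := by
    rcases le_or_gt 0 φ with hφ0 | hφ0
    · have h := cos_pos_of_mem_Ioo (x := φ - η) ⟨by linarith, by linarith [le_abs_self φ]⟩
      rw [Real.cos_sub] at h
      nlinarith [le_abs_self (Real.sin φ)]
    · have h := cos_pos_of_mem_Ioo (x := φ + η) ⟨by linarith [neg_abs_le φ], by linarith⟩
      rw [Real.cos_add] at h
      nlinarith [neg_abs_le (Real.sin φ)]
  intro h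
  have hWeq : W = -(r * exp (φ * I)) := eq_neg_of_add_eq_zero_right h
  rw [hWeq, neg_re, neg_im, abs_neg, re_ofReal_mul, im_ofReal_mul, exp_ofReal_mul_I_re,
    exp_ofReal_mul_I_im, abs_mul, abs_of_pos hr] at hW
  nlinarith [mul_pos hr hpos]

section PrincipalPart

variable {m : ℕ} {a δ : ℝ} (c : Fin m → ℝ) {z : Fin m → ℂ}

lemma re_mul_zMinus_sub_cDot_ge (ha : 0 ≤ a) (hδ0 : 0 ≤ δ) (hδ : δ ≤ 1 / 2)
    (hδc : (∑ k, |c k|) * δ ≤ a / 4) (hz : ∀ k, z k ∈ sectorSigma δ) :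
    a / 4 * √(∑ k, ‖z k‖ ^ 2) ≤ ((a : ℂ) * zMinus z - cDot c z).re := by
  set s := √(∑ k, ‖z k‖ ^ 2)
  have hs : 0 ≤ s := Real.sqrt_nonneg _
  have hx := mul_le_mul_of_nonneg_left (re_zMinus_ge hδ0 hδ hz) ha
  have hcz : |(cDot c z).re| ≤ (∑ k, |c k|) * (δ * s) := abs_re_cDot_le c fun k =>
    (abs_re_le_of_mem_sectorSigma (hz k)).trans
      (mul_le_mul_of_nonneg_left (norm_le_sqrt_sum_sq z k) hδ0)
  rw [sub_re, re_ofReal_mul]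
  nlinarith [abs_le.1 hcz, mul_le_mul_of_nonneg_right hδc hs]

lemma abs_im_mul_zMinus_sub_cDot_le (ha : 0 ≤ a) (hδ0 : 0 ≤ δ) (hδ : δ ≤ 1)
    (hz : ∀ k, z k ∈ sectorSigma δ) :
    |((a : ℂ) * zMinus z - cDot c z).im| ≤ (a + ∑ k, |c k|) * √(∑ k, ‖z k‖ ^ 2) := by
  set s := √(∑ k, ‖z k‖ ^ 2)
  have hs : 0 ≤ s := Real.sqrt_nonneg _
  have hx : |a * (zMinus z).im| ≤ a * s := by
    rw [abs_mul, abs_of_nonneg ha]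
    exact mul_le_mul_of_nonneg_left ((abs_im_zMinus_le hδ0 hz).trans
      (mul_le_of_le_one_left hs hδ)) ha
  have hcz : |(cDot c z).im| ≤ (∑ k, |c k|) * s :=
    (abs_im_le_norm _).trans (norm_cDot_le c (norm_le_sqrt_sum_sq z))
  rw [sub_im, im_ofReal_mul, add_mul]
  exact (abs_sub _ _).trans (add_le_add hx hcz)

end PrincipalPart

theorem statement0 (n : ℕ) (hn : 2 ≤ n) (α β : ℝ) (hαβ : 0 < α + β)
    (c : Fin (n - 1) → ℝ) :
    ∃ δ ∈ Ioo (0 : ℝ) (π / 2), ∃ η ∈ Ioo (0 : ℝ) (π / 2),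
      ∀ lam ∈ sectorS (π / 2 + η), ∀ z : Fin (n - 1) → ℂ,
        (∀ k, z k ∈ sectorSigma δ) →
          lam ≠ 0 ∧
          ((α + β : ℝ) : ℂ) * zMinus z - cDot c z ≠ 0 ∧
          lam + ((α + β : ℝ) : ℂ) * zMinus z - cDot c z ≠ 0 := by
  set C := ∑ k, |c k|
  have hC : 0 ≤ C := Finset.sum_nonneg fun _ _ => abs_nonneg _
  obtain ⟨δ, ⟨hδ0, hδ⟩, hδC⟩ : ∃ δ ∈ Ioc (0 : ℝ) (1 / 2), C * δ ≤ (α + β) / 4 := by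
    obtain ⟨δ₀, hδ₀, hδ₀C⟩ := exists_pos_mul_lt (by positivity : 0 < (α + β) / 4) C
    exact ⟨min δ₀ (1 / 2), ⟨lt_min hδ₀ one_half_pos, min_le_right _ _⟩,
      (mul_le_mul_of_nonneg_left (min_le_left _ _) hC).trans hδ₀C.le⟩
  obtain ⟨η, hη, hηBA⟩ := exists_mul_sin_lt_mul_cos (by positivity : 0 < (α + β) / 4) (α + β + C)
  refine ⟨δ, ⟨hδ0, by linarith [pi_gt_three]⟩, η, hη, fun lam hlam z hz => ?_⟩
  set W := ((α + β : ℝ) : ℂ) * zMinus z - cDot c z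
  set s := √(∑ k, ‖z k‖ ^ 2)
  have hs : 0 < s := (norm_pos_iff.2 (ne_zero_of_mem_sectorSigma (hz ⟨0, by omega⟩))).trans_le
    (norm_le_sqrt_sum_sq z _)
  have hre : (α + β) / 4 * s ≤ W.re := re_mul_zMinus_sub_cDot_ge c hαβ.le hδ0.le hδ hδC hz
  have him : |W.im| ≤ (α + β + C) * s :=
    abs_im_mul_zMinus_sub_cDot_le c hαβ.le hδ0.le (by linarith) hz
  have hsin : 0 ≤ Real.sin η := sin_nonneg_of_nonneg_of_le_pi hη.1.le (by linarith [hη.2, pi_pos])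
  have hcos : 0 ≤ Real.cos η := (cos_pos_of_mem_Ioo ⟨by linarith [hη.1, pi_pos], hη.2⟩).le
  have hW : |W.im| * Real.sin η < W.re * Real.cos η :=
    calc |W.im| * Real.sin η ≤ (α + β + C) * s * Real.sin η := mul_le_mul_of_nonneg_right him hsin
      _ < (α + β) / 4 * s * Real.cos η := by nlinarith
      _ ≤ W.re * Real.cos η := mul_le_mul_of_nonneg_right hre hcos
  refine ⟨ne_zero_of_mem_sectorS hlam, fun h0 => ?_, ?_⟩
  · rw [h0, zero_re] at hre
    nlinarith
  · rw [add_sub_assoc]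
    exact add_ne_zero_of_mem_sectorS hη.1.le hη.2 hlam hW
end

section
/- Let q ∈ (1,∞) and σ ∈ (1/q, 1). There is a constant C = C(q,M) > 0, independent of T, such that for every T > 0 and all strongly measurable u : (0,T) → X and v : (0,T) → Y with finite L_∞ and W_q^σ norms, one has ‖uv‖_{W_q^σ((0,T),Z)} ≤ C·[ ‖u‖_{L_∞(0,T;X)}·‖v‖_{W_q^σ((0,T),Y)} + ‖v‖_{L_∞(0,T;Y)}·‖u‖_{W_q^σ((0,T),X)} ]. -/
open MeasureTheory Set ENNReal

/-- The `W_q^σ((0,T),X)` Sobolev–Slobodeckii norm, valued in `ℝ≥0∞`. -/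
noncomputable def wsNorm {X : Type*} [NormedAddCommGroup X] (q σ T : ℝ) (u : ℝ → X) : ℝ≥0∞ :=
  (∫⁻ t in Ioo (0:ℝ) T, (‖u t‖₊ : ℝ≥0∞) ^ q) ^ (1 / q) +
    (∫⁻ t in Ioo (0:ℝ) T, ∫⁻ s in Ioo (0:ℝ) T,
        (‖u t - u s‖₊ : ℝ≥0∞) ^ q / (ENNReal.ofReal |t - s|) ^ (1 + σ * q)) ^ (1 / q)

/-- The `L_∞(0,T;X)` norm (essential supremum), valued in `ℝ≥0∞`. -/
noncomputable def linfNorm {X : Type*} [NormedAddCommGroup X] (T : ℝ) (u : ℝ → X) : ℝ≥0∞ :=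
  essSup (fun t => (‖u t‖₊ : ℝ≥0∞)) (volume.restrict (Ioo (0:ℝ) T))

/-- The `C^ρ([0,T],X)` Hölder norm, valued in `ℝ≥0∞`. -/
noncomputable def cHolderNorm {X : Type*} [NormedAddCommGroup X] (ρ T : ℝ) (u : ℝ → X) : ℝ≥0∞ :=
  (⨆ t ∈ Icc (0:ℝ) T, (‖u t‖₊ : ℝ≥0∞)) +
    ⨆ t ∈ Icc (0:ℝ) T, ⨆ s ∈ Icc (0:ℝ) T, ⨆ _ : t ≠ s,
      (‖u t - u s‖₊ : ℝ≥0∞) / (ENNReal.ofReal |t - s|) ^ ρ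

/-!
Both parts of `wsNorm` are `L^q` norms: the Gagliardo seminorm of `u` is the `L^q` norm of
`(t, s) ↦ u t - u s` for the measure `|t - s|^(-1-σq) dt ds` on `(0,T)²`. The `L^q` part of
`B u v` is then bounded by Hölder's inequality with exponents `(∞, q)`, and the seminorm part by
`B (u t) (v t) - B (u s) (v s) = B (u t) (v t - v s) + B (u t - u s) (v s)` and Minkowski's
inequality. This gives the constant `‖B‖ ≤ max M 0`, independent of `T`.
-/

section Bilinear

variable {𝕜 E F G : Type*} [NontriviallyNormedField 𝕜]
  [NormedAddCommGroup E] [NormedSpace 𝕜 E] [NormedAddCommGroup F] [NormedSpace 𝕜 F]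
  [NormedAddCommGroup G] [NormedSpace 𝕜 G]

lemma ContinuousLinearMap.enorm_apply₂_sub_apply₂_le (B : E →L[𝕜] F →L[𝕜] G) (x x' : E)
    (y y' : F) :
    ‖B x y - B x' y'‖ₑ ≤ ‖B‖ₑ * ‖x‖ₑ * ‖y - y'‖ₑ + ‖B‖ₑ * ‖x - x'‖ₑ * ‖y'‖ₑ := by
  have hsplit : B x y - B x' y' = B x (y - y') + B (x - x') y' := by
    simp only [map_sub, sub_apply]
    abel
  rw [hsplit]
  exact (enorm_add_le _ _).trans (add_le_add (B.le_opENorm₂ _ _) (B.le_opENorm₂ _ _))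

variable {α : Type*} [MeasurableSpace α] {μ : Measure α} {p : ℝ≥0∞}

lemma eLpNorm_bilinear_sub_le [SFinite μ] {ν : Measure (α × α)} (hν : ν ≪ μ.prod μ)
    (B : E →L[𝕜] F →L[𝕜] G) {f : α → E} {g : α → F}
    (hf : AEStronglyMeasurable f μ) (hg : AEStronglyMeasurable g μ) (hp : 1 ≤ p) :
    eLpNorm (fun z : α × α => B (f z.1) (g z.1) - B (f z.2) (g z.2)) p ν ≤
      ‖B‖ₑ * (eLpNorm f ∞ μ * eLpNorm (fun z : α × α => g z.1 - g z.2) p ν +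
        eLpNorm g ∞ μ * eLpNorm (fun z : α × α => f z.1 - f z.2) p ν) := by
  set Δf := fun z : α × α => f z.1 - f z.2
  set Δg := fun z : α × α => g z.1 - g z.2
  have hΔf : AEStronglyMeasurable Δf ν := (hf.comp_fst.sub hf.comp_snd).mono_ac hν
  have hΔg : AEStronglyMeasurable Δg ν := (hg.comp_fst.sub hg.comp_snd).mono_ac hν
  have hbound : ∀ᵐ z ∂ν, ‖f z.1‖ₑ ≤ eLpNorm f ∞ μ ∧ ‖g z.2‖ₑ ≤ eLpNorm g ∞ μ := by
    rw [eLpNorm_exponent_top, eLpNorm_exponent_top]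
    exact hν.ae_le <| (Measure.quasiMeasurePreserving_fst.ae ae_le_eLpNormEssSup).and
      (Measure.quasiMeasurePreserving_snd.ae ae_le_eLpNormEssSup)
  calc eLpNorm (fun z : α × α => B (f z.1) (g z.1) - B (f z.2) (g z.2)) p ν
      ≤ eLpNorm (fun z => ‖B‖ₑ * eLpNorm f ∞ μ * ‖Δg z‖ₑ +
          ‖B‖ₑ * eLpNorm g ∞ μ * ‖Δf z‖ₑ) p ν := by
        refine eLpNorm_mono_enorm_ae (hbound.mono fun z ⟨hfz, hgz⟩ => ?_)
        calc ‖B (f z.1) (g z.1) - B (f z.2) (g z.2)‖ₑ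
            ≤ ‖B‖ₑ * ‖f z.1‖ₑ * ‖Δg z‖ₑ + ‖B‖ₑ * ‖Δf z‖ₑ * ‖g z.2‖ₑ :=
              B.enorm_apply₂_sub_apply₂_le _ _ _ _
          _ ≤ _ := by
              rw [enorm_eq_self, mul_right_comm _ ‖Δf z‖ₑ]
              gcongr
    _ ≤ eLpNorm (fun z => ‖B‖ₑ * eLpNorm f ∞ μ * ‖Δg z‖ₑ) p ν +
          eLpNorm (fun z => ‖B‖ₑ * eLpNorm g ∞ μ * ‖Δf z‖ₑ) p ν :=
        eLpNorm_add_le (hΔg.enorm.const_mul _).aestronglyMeasurable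
          (hΔf.enorm.const_mul _).aestronglyMeasurable hp
    _ ≤ ‖B‖ₑ * eLpNorm f ∞ μ * eLpNorm Δg p ν + ‖B‖ₑ * eLpNorm g ∞ μ * eLpNorm Δf p ν := by
        gcongr <;> exact eLpNorm_le_mul_eLpNorm_of_ae_le_mul'' p ‹_› (by simp)
    _ = _ := by ring

end Bilinear

noncomputable def slobodeckijMeasure (q σ T : ℝ) : Measure (ℝ × ℝ) :=
  ((volume.restrict (Ioo (0:ℝ) T)).prod (volume.restrict (Ioo (0:ℝ) T))).withDensity
    fun z => (ENNReal.ofReal |z.1 - z.2| ^ (1 + σ * q))⁻¹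

lemma slobodeckijMeasure_absolutelyContinuous (q σ T : ℝ) :
    slobodeckijMeasure q σ T ≪
      (volume.restrict (Ioo (0:ℝ) T)).prod (volume.restrict (Ioo (0:ℝ) T)) :=
  withDensity_absolutelyContinuous _ _

lemma wsNorm_eq_eLpNorm_add_eLpNorm {X : Type*} [NormedAddCommGroup X] {q σ T : ℝ} (hq : 0 < q)
    {u : ℝ → X} (hu : AEStronglyMeasurable u (volume.restrict (Ioo (0:ℝ) T))) :
    wsNorm q σ T u = eLpNorm u (ENNReal.ofReal q) (volume.restrict (Ioo (0:ℝ) T)) +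
      eLpNorm (fun z : ℝ × ℝ => u z.1 - u z.2) (ENNReal.ofReal q) (slobodeckijMeasure q σ T) := by
  have hq' : ENNReal.ofReal q ≠ 0 := ENNReal.ofReal_ne_zero_iff.mpr hq
  have hdensity : Measurable fun z : ℝ × ℝ => (ENNReal.ofReal |z.1 - z.2| ^ (1 + σ * q))⁻¹ := by
    fun_prop
  have hdiff : AEMeasurable (fun z : ℝ × ℝ => ‖u z.1 - u z.2‖ₑ ^ q)
      ((volume.restrict (Ioo (0:ℝ) T)).prod (volume.restrict (Ioo (0:ℝ) T))) :=
    (hu.comp_fst.sub hu.comp_snd).enorm.pow_const q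
  rw [wsNorm, eLpNorm_eq_lintegral_rpow_enorm_toReal hq' ofReal_ne_top,
    eLpNorm_eq_lintegral_rpow_enorm_toReal hq' ofReal_ne_top, toReal_ofReal hq.le,
    slobodeckijMeasure, lintegral_withDensity_eq_lintegral_mul₀ hdensity.aemeasurable hdiff,
    lintegral_prod _ (hdensity.aemeasurable.mul hdiff)]
  simp only [Pi.mul_apply, enorm_eq_nnnorm, div_eq_mul_inv, mul_comm]

lemma linfNorm_eq_eLpNorm_top {X : Type*} [NormedAddCommGroup X] (T : ℝ) (u : ℝ → X) :
    linfNorm T u = eLpNorm u ∞ (volume.restrict (Ioo (0:ℝ) T)) := by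
  rw [eLpNorm_exponent_top]
  rfl

lemma wsNorm_bilinear_comp_le {𝕜 X Y Z : Type*} [NontriviallyNormedField 𝕜]
    [NormedAddCommGroup X] [NormedSpace 𝕜 X] [NormedAddCommGroup Y] [NormedSpace 𝕜 Y]
    [NormedAddCommGroup Z] [NormedSpace 𝕜 Z] (B : X →L[𝕜] Y →L[𝕜] Z) {q σ T : ℝ} (hq : 1 ≤ q)
    {u : ℝ → X} {v : ℝ → Y} (hu : AEStronglyMeasurable u (volume.restrict (Ioo (0:ℝ) T)))
    (hv : AEStronglyMeasurable v (volume.restrict (Ioo (0:ℝ) T))) :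
    wsNorm q σ T (fun t => B (u t) (v t)) ≤
      ‖B‖ₑ * (linfNorm T u * wsNorm q σ T v + linfNorm T v * wsNorm q σ T u) := by
  have hq₀ : 0 < q := zero_lt_one.trans_le hq
  have hp : 1 ≤ ENNReal.ofReal q := by simpa using ENNReal.ofReal_le_ofReal hq
  have hBuv : AEStronglyMeasurable (fun t => B (u t) (v t)) (volume.restrict (Ioo (0:ℝ) T)) :=
    B.continuous₂.comp_aestronglyMeasurable₂ hu hv
  have hLq := eLpNorm_le_eLpNorm_top_mul_eLpNorm (ENNReal.ofReal q) u hv (B · ·) ‖B‖₊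
    (Filter.Eventually.of_forall fun t => by
      rw [← NNReal.coe_le_coe]
      exact B.le_opNorm₂ (u t) (v t))
  have hSeminorm := eLpNorm_bilinear_sub_le (slobodeckijMeasure_absolutelyContinuous q σ T) B
    hu hv hp
  rw [wsNorm_eq_eLpNorm_add_eLpNorm hq₀ hBuv, wsNorm_eq_eLpNorm_add_eLpNorm hq₀ hu,
    wsNorm_eq_eLpNorm_add_eLpNorm hq₀ hv, linfNorm_eq_eLpNorm_top, linfNorm_eq_eLpNorm_top]
  calc _ ≤ _ := add_le_add hLq hSeminorm
    _ ≤ _ + ‖B‖ₑ * eLpNorm v ∞ (volume.restrict (Ioo (0:ℝ) T)) *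
          eLpNorm u (ENNReal.ofReal q) (volume.restrict (Ioo (0:ℝ) T)) := le_self_add
    _ = _ := by simp only [enorm_eq_nnnorm]; ring

theorem statement7_general {X Y Z : Type*}
    [NormedAddCommGroup X] [NormedSpace ℝ X]
    [NormedAddCommGroup Y] [NormedSpace ℝ Y]
    [NormedAddCommGroup Z] [NormedSpace ℝ Z]
    (B : X →ₗ[ℝ] Y →ₗ[ℝ] Z) (M : ℝ) (hB : ∀ x y, ‖B x y‖ ≤ M * ‖x‖ * ‖y‖)
    (q σ : ℝ) (hq : 1 < q) :
    ∃ C > (0 : ℝ), ∀ T > (0 : ℝ), ∀ u : ℝ → X, ∀ v : ℝ → Y,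
      AEStronglyMeasurable u (volume.restrict (Ioo (0:ℝ) T)) →
      AEStronglyMeasurable v (volume.restrict (Ioo (0:ℝ) T)) →
      linfNorm T u < ⊤ → wsNorm q σ T u < ⊤ →
      linfNorm T v < ⊤ → wsNorm q σ T v < ⊤ →
      wsNorm q σ T (fun t => B (u t) (v t)) ≤
        ENNReal.ofReal C *
          (linfNorm T u * wsNorm q σ T v + linfNorm T v * wsNorm q σ T u) := by
  refine ⟨max M 1, by positivity, fun T _ u v hu hv _ _ _ _ => ?_⟩
  have hnorm : ‖B.mkContinuous₂ M hB‖ₑ ≤ ENNReal.ofReal (max M 1) := by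
    rw [← ofReal_norm]
    exact ENNReal.ofReal_le_ofReal <| (LinearMap.mkContinuous₂_norm_le' B hB).trans <|
      max_le_max_left M zero_le_one
  exact (wsNorm_bilinear_comp_le (B.mkContinuous₂ M hB) hq.le hu hv).trans (by gcongr)

theorem statement7 {X Y Z : Type*}
    [NormedAddCommGroup X] [NormedSpace ℝ X] [CompleteSpace X]
    [NormedAddCommGroup Y] [NormedSpace ℝ Y] [CompleteSpace Y]
    [NormedAddCommGroup Z] [NormedSpace ℝ Z] [CompleteSpace Z]
    (B : X →ₗ[ℝ] Y →ₗ[ℝ] Z) (M : ℝ) (hB : ∀ x y, ‖B x y‖ ≤ M * ‖x‖ * ‖y‖)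
    (q σ : ℝ) (hq : 1 < q) (hσ1 : 1 / q < σ) (hσ2 : σ < 1) :
    ∃ C > (0 : ℝ), ∀ T > (0 : ℝ), ∀ u : ℝ → X, ∀ v : ℝ → Y,
      AEStronglyMeasurable u (volume.restrict (Ioo (0:ℝ) T)) →
      AEStronglyMeasurable v (volume.restrict (Ioo (0:ℝ) T)) →
      linfNorm T u < ⊤ → wsNorm q σ T u < ⊤ →
      linfNorm T v < ⊤ → wsNorm q σ T v < ⊤ →
      wsNorm q σ T (fun t => B (u t) (v t)) ≤
        ENNReal.ofReal C *
          (linfNorm T u * wsNorm q σ T v + linfNorm T v * wsNorm q σ T u) :=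
  statement7_general B M hB q σ hq
end

section
/- Let Ω ⊆ ℝ^m be a measurable set, q ∈ [1,∞), r ∈ (0,1), N₀ ≥ 1 a natural number, 𝒦 a finite index set, and f_k : Ω → ℝ (k ∈ 𝒦) measurable functions such that every x ∈ Ω satisfies f_k(x) ≠ 0 for at most N₀ indices k. Then ‖∑_{k∈𝒦} f_k‖_{W_q^r(Ω)}^q ≤ 2·(2N₀)^q · ∑_{k∈𝒦} ‖f_k‖_{W_q^r(Ω)}^q. -/
open MeasureTheory Set ENNReal

/-- The `q`-th power of the Gagliardo seminorm
`[f]_{q,r,Ω}^q = ∫_Ω ∫_Ω |f(x)-f(y)|^q / |x-y|^{m+rq} dx dy`, valued in `ℝ≥0∞`. -/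
noncomputable def gagliardoQ {m : ℕ} (q r : ℝ) (Ω : Set (EuclideanSpace ℝ (Fin m)))
    (f : EuclideanSpace ℝ (Fin m) → ℝ) : ℝ≥0∞ :=
  ∫⁻ x in Ω, ∫⁻ y in Ω,
    (‖f x - f y‖₊ : ℝ≥0∞) ^ q / (ENNReal.ofReal (dist x y)) ^ ((m : ℝ) + r * q)

/-- The `q`-th power of the `W_q^r(Ω)` norm:
`‖f‖_{W_q^r(Ω)}^q = ∫_Ω |f|^q + [f]_{q,r,Ω}^q`, valued in `ℝ≥0∞`. -/
noncomputable def sobolevQ {m : ℕ} (q r : ℝ) (Ω : Set (EuclideanSpace ℝ (Fin m)))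
    (f : EuclideanSpace ℝ (Fin m) → ℝ) : ℝ≥0∞ :=
  (∫⁻ x in Ω, (‖f x‖₊ : ℝ≥0∞) ^ q) + gagliardoQ q r Ω f


open Finset

/-! Every `a_k ≥ 0` is at most `(∑ a_k^q)^{1/q}`, so if at most `n` of them are nonzero, then
`(∑ a_k)^q ≤ n^q ∑ a_k^q`. Applied pointwise to `f_k(x)` and to `f_k(x) - f_k(y)`, of which at
most `N₀` resp. `2 N₀` are nonzero, and integrated, this bounds both parts of the norm of `∑ f_k`
by `(2 N₀)^q` times the corresponding sums. -/

theorem ENNReal.rpow_sum_le_of_card_support_le {ι : Type*} {q : ℝ} (hq : 0 < q) {n : ℕ}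
    (s : Finset ι) (a : ι → ℝ≥0∞) (hn : #{k ∈ s | a k ≠ 0} ≤ n) :
    (∑ k ∈ s, a k) ^ q ≤ n ^ q * ∑ k ∈ s, a k ^ q := by
  set B := (∑ k ∈ s, a k ^ q) ^ q⁻¹
  have hB : ∀ k ∈ s, a k ≤ B := fun k hk =>
    (ENNReal.le_rpow_inv_iff hq).2 (single_le_sum (f := fun j => a j ^ q) (by simp) hk)
  have hsum : ∑ k ∈ s, a k ≤ n * B :=
    calc ∑ k ∈ s, a k = ∑ k ∈ s with a k ≠ 0, a k := (sum_filter_ne_zero s).symm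
      _ ≤ #{k ∈ s | a k ≠ 0} * B := by
        simpa using sum_le_card_nsmul _ _ B fun k hk => hB k (mem_filter.1 hk).1
      _ ≤ n * B := by gcongr
  calc (∑ k ∈ s, a k) ^ q ≤ (n * B) ^ q := ENNReal.rpow_le_rpow hsum hq.le
    _ = n ^ q * ∑ k ∈ s, a k ^ q := by
      rw [ENNReal.mul_rpow_of_nonneg _ _ hq.le, ENNReal.rpow_inv_rpow hq.ne']

theorem enorm_sum_rpow_le_of_card_support_le {ι E : Type*} [NormedAddCommGroup E]
    [DecidableEq E] {q : ℝ} (hq : 0 < q) {n : ℕ} (s : Finset ι) (x : ι → E)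
    (hn : #{k ∈ s | x k ≠ 0} ≤ n) :
    ‖∑ k ∈ s, x k‖ₑ ^ q ≤ n ^ q * ∑ k ∈ s, ‖x k‖ₑ ^ q := by
  have hsupp : #{k ∈ s | ‖x k‖ₑ ≠ 0} ≤ n :=
    (Finset.card_le_card <| monotone_filter_right s fun _ _ => mt fun h => by simp [h]).trans hn
  calc ‖∑ k ∈ s, x k‖ₑ ^ q ≤ (∑ k ∈ s, ‖x k‖ₑ) ^ q :=
        ENNReal.rpow_le_rpow (enorm_sum_le s x) hq.le
    _ ≤ n ^ q * ∑ k ∈ s, ‖x k‖ₑ ^ q := ENNReal.rpow_sum_le_of_card_support_le hq s _ hsupp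

theorem Finset.card_filter_sub_ne_zero_le {ι G : Type*} [AddGroup G] [DecidableEq G]
    (s : Finset ι) (a b : ι → G) :
    #{k ∈ s | a k - b k ≠ 0} ≤ #{k ∈ s | a k ≠ 0} + #{k ∈ s | b k ≠ 0} := by
  classical
  calc #{k ∈ s | a k - b k ≠ 0} ≤ #{k ∈ s | a k ≠ 0 ∨ b k ≠ 0} :=
        Finset.card_le_card <| monotone_filter_right s fun _ _ h => by
          contrapose! h; simp [h.1, h.2]
    _ ≤ #{k ∈ s | a k ≠ 0} + #{k ∈ s | b k ≠ 0} := by rw [filter_or]; exact card_union_le _ _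

theorem MeasureTheory.lintegral_le_const_mul_sum_lintegral {α ι : Type*} [MeasurableSpace α]
    (μ : Measure α) (s : Finset ι) {F : α → ℝ≥0∞} {G : ι → α → ℝ≥0∞} (c : ℝ≥0∞)
    (hG : ∀ k ∈ s, Measurable (G k)) (hFG : ∀ x, F x ≤ c * ∑ k ∈ s, G k x) :
    ∫⁻ x, F x ∂μ ≤ c * ∑ k ∈ s, ∫⁻ x, G k x ∂μ :=
  calc ∫⁻ x, F x ∂μ ≤ ∫⁻ x, c * ∑ k ∈ s, G k x ∂μ := lintegral_mono hFG
    _ = c * ∑ k ∈ s, ∫⁻ x, G k x ∂μ := by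
      rw [lintegral_const_mul c (Finset.measurable_sum s hG), lintegral_finsetSum s hG]

theorem MeasureTheory.lintegral_enorm_sum_rpow_le {α ι E : Type*} [MeasurableSpace α]
    [NormedAddCommGroup E] [DecidableEq E] [MeasurableSpace E] [OpensMeasurableSpace E]
    (μ : Measure α) {q : ℝ} (hq : 0 < q) {n : ℕ} (s : Finset ι) (f : ι → α → E)
    (hf : ∀ k ∈ s, Measurable (f k)) (hn : ∀ x, #{k ∈ s | f k x ≠ 0} ≤ n) :
    ∫⁻ x, ‖∑ k ∈ s, f k x‖ₑ ^ q ∂μ ≤ n ^ q * ∑ k ∈ s, ∫⁻ x, ‖f k x‖ₑ ^ q ∂μ :=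
  lintegral_le_const_mul_sum_lintegral μ s _ (fun k hk => (hf k hk).enorm.pow_const q)
    fun x => enorm_sum_rpow_le_of_card_support_le hq s _ (hn x)

theorem gagliardoQ_sum_le {m : ℕ} {ι : Type*} {q : ℝ} (r : ℝ) (hq : 0 < q) {n : ℕ}
    (Ω : Set (EuclideanSpace ℝ (Fin m))) (s : Finset ι)
    (f : ι → EuclideanSpace ℝ (Fin m) → ℝ) (hf : ∀ k ∈ s, Measurable (f k))
    (hn : ∀ x y, #{k ∈ s | f k x - f k y ≠ 0} ≤ n) :
    gagliardoQ q r Ω (fun x => ∑ k ∈ s, f k x) ≤ n ^ q * ∑ k ∈ s, gagliardoQ q r Ω (f k) := by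
  set D : EuclideanSpace ℝ (Fin m) → EuclideanSpace ℝ (Fin m) → ℝ≥0∞ :=
    fun x y => ENNReal.ofReal (dist x y) ^ ((m : ℝ) + r * q)
  have hmeas : ∀ k ∈ s, Measurable fun p : EuclideanSpace ℝ (Fin m) × EuclideanSpace ℝ (Fin m) =>
      ‖f k p.1 - f k p.2‖ₑ ^ q / D p.1 p.2 := fun k hk =>
    ((((hf k hk).comp measurable_fst).sub ((hf k hk).comp measurable_snd)).enorm.pow_const q).div
      (measurable_dist.ennreal_ofReal.pow_const _)
  refine lintegral_le_const_mul_sum_lintegral _ s _ (fun k hk => (hmeas k hk).lintegral_prod_right')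
    fun x => lintegral_le_const_mul_sum_lintegral _ s _
      (fun k hk => (hmeas k hk).comp measurable_prodMk_left) fun y => ?_
  calc ‖(∑ k ∈ s, f k x) - ∑ k ∈ s, f k y‖ₑ ^ q / D x y
      ≤ (n ^ q * ∑ k ∈ s, ‖f k x - f k y‖ₑ ^ q) / D x y := by
        rw [← sum_sub_distrib]
        exact ENNReal.div_le_div_right (enorm_sum_rpow_le_of_card_support_le hq s _ (hn x y)) _
    _ = n ^ q * ∑ k ∈ s, ‖f k x - f k y‖ₑ ^ q / D x y := by
        simp only [div_eq_mul_inv, mul_assoc, sum_mul]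

theorem sobolevQ_sum_le {m : ℕ} {ι : Type*} {q : ℝ} (r : ℝ) (hq : 0 < q) {n : ℕ}
    (Ω : Set (EuclideanSpace ℝ (Fin m))) (s : Finset ι)
    (f : ι → EuclideanSpace ℝ (Fin m) → ℝ) (hf : ∀ k ∈ s, Measurable (f k))
    (hn : ∀ x, #{k ∈ s | f k x ≠ 0} ≤ n) :
    sobolevQ q r Ω (fun x => ∑ k ∈ s, f k x) ≤
      (2 * n : ℝ≥0∞) ^ q * ∑ k ∈ s, sobolevQ q r Ω (f k) := by
  have hL := lintegral_enorm_sum_rpow_le (volume.restrict Ω) hq s f hf (n := 2 * n)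
    fun x => (hn x).trans (by omega)
  have hG := gagliardoQ_sum_le r hq Ω s f hf (n := 2 * n) fun x y =>
    (card_filter_sub_ne_zero_le s _ _).trans (by linarith [hn x, hn y])
  push_cast at hL hG
  simp only [sobolevQ, sum_add_distrib, mul_add]
  exact add_le_add hL hG

theorem statement12_general {m : ℕ} (Ω : Set (EuclideanSpace ℝ (Fin m)))
    (q r : ℝ) (hq : 1 ≤ q)
    (N₀ : ℕ)
    {ι : Type*} (𝒦 : Finset ι) (f : ι → EuclideanSpace ℝ (Fin m) → ℝ)
    (hmeas : ∀ k ∈ 𝒦, Measurable (f k))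
    (hover : ∀ x, {k ∈ (𝒦 : Set ι) | f k x ≠ 0}.ncard ≤ N₀) :
    sobolevQ q r Ω (fun x => ∑ k ∈ 𝒦, f k x) ≤
      2 * (2 * (N₀ : ℝ≥0∞)) ^ q * ∑ k ∈ 𝒦, sobolevQ q r Ω (f k) := by
  have hcard : ∀ x, #{k ∈ 𝒦 | f k x ≠ 0} ≤ N₀ := fun x => by
    simpa [← Finset.coe_filter, Set.ncard_coe_finset] using hover x
  calc sobolevQ q r Ω (fun x => ∑ k ∈ 𝒦, f k x)
      ≤ (2 * (N₀ : ℝ≥0∞)) ^ q * ∑ k ∈ 𝒦, sobolevQ q r Ω (f k) :=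
        sobolevQ_sum_le r (by linarith) Ω 𝒦 f hmeas hcard
    _ ≤ 2 * (2 * (N₀ : ℝ≥0∞)) ^ q * ∑ k ∈ 𝒦, sobolevQ q r Ω (f k) := by
        rw [mul_assoc]
        exact le_mul_of_one_le_left' one_le_two

theorem statement12 {m : ℕ} (Ω : Set (EuclideanSpace ℝ (Fin m))) (hΩ : MeasurableSet Ω)
    (q r : ℝ) (hq : 1 ≤ q) (hr0 : 0 < r) (hr1 : r < 1)
    (N₀ : ℕ) (hN₀ : 1 ≤ N₀)
    {ι : Type*} (𝒦 : Finset ι) (f : ι → EuclideanSpace ℝ (Fin m) → ℝ)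
    (hmeas : ∀ k ∈ 𝒦, Measurable (f k))
    (hover : ∀ x, {k ∈ (𝒦 : Set ι) | f k x ≠ 0}.ncard ≤ N₀) :
    sobolevQ q r Ω (fun x => ∑ k ∈ 𝒦, f k x) ≤
      2 * (2 * (N₀ : ℝ≥0∞)) ^ q * ∑ k ∈ 𝒦, sobolevQ q r Ω (f k) :=
  statement12_general Ω q r hq N₀ 𝒦 f hmeas hover
end

section
/- Let Ω ⊆ ℝ^m be a measurable set, q ∈ [1,∞), r ∈ (0,1), 𝒦 a finite index set with cardinality |𝒦| ≤ K₁, C > 0, K₀ ≥ 0, N₀ ≥ 1, and let ψ_k : Ω → ℝ (k ∈ 𝒦) be bounded measurable functions with |ψ_k(x)| ≤ C for all x, [ψ_k]_{q,r,Ω}^q ≤ K₀ for every k, and such that every x ∈ Ω satisfies ψ_k(x) ≠ 0 for at most N₀ indices k. Then for every bounded measurable f : Ω → ℝ with [f]_{q,r,Ω} < ∞: ∑_{k∈𝒦} [ψ_k f]_{q,r,Ω}^q ≤ 2^q·( N₀·C^q·[f]_{q,r,Ω}^q + K₁·K₀·‖f‖_{L_∞(Ω)}^q ). -/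
open MeasureTheory Set ENNReal

/-
Write `ψ(x)f(x) - ψ(y)f(y) = ψ(x)(f(x) - f(y)) + (ψ(x) - ψ(y))f(y)` and use
`(a + b)^q ≤ 2^q (a^q + b^q)`. Integrating, `[ψ_k f]^q` is at most `2^q` times
`∫_Ω |ψ_k(x)|^q ∫_Ω |f(x)-f(y)|^q/|x-y|^{m+rq} dy dx + ‖f‖_∞^q [ψ_k]^q`.
Summed over `k`, the first terms are controlled by the pointwise bound
`∑_k |ψ_k(x)|^q ≤ N₀ C^q`, which holds because at most `N₀` of the `ψ_k(x)` are nonzero,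
and the second by `|𝒦| K₀ ‖f‖_∞^q`.
-/

lemma ENNReal.add_rpow_le_two_rpow_mul (a b : ℝ≥0∞) {q : ℝ} (hq : 0 ≤ q) :
    (a + b) ^ q ≤ 2 ^ q * (a ^ q + b ^ q) :=
  calc (a + b) ^ q ≤ (2 * max a b) ^ q := by
        gcongr
        rw [two_mul]
        exact add_le_add (le_max_left a b) (le_max_right a b)
    _ = 2 ^ q * max a b ^ q := ENNReal.mul_rpow_of_nonneg _ _ hq
    _ ≤ 2 ^ q * (a ^ q + b ^ q) := by
        gcongr
        rcases le_total a b with h | h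
        · rw [max_eq_right h]; exact le_add_self
        · rw [max_eq_left h]; exact le_self_add

lemma ENNReal.sum_le_card_filter_ne_zero_mul {ι : Type*} {s : Finset ι} {a : ι → ℝ≥0∞}
    {c : ℝ≥0∞} {N : ℕ} (ha : ∀ k ∈ s, a k ≤ c) (hN : (s.filter (a · ≠ 0)).card ≤ N) :
    ∑ k ∈ s, a k ≤ N * c :=
  calc ∑ k ∈ s, a k = ∑ k ∈ s.filter (a · ≠ 0), a k := Finset.sum_filter_ne_zero s |>.symm
    _ ≤ (s.filter (a · ≠ 0)).card * c := by
        rw [← nsmul_eq_mul]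
        exact Finset.sum_le_card_nsmul _ _ _ fun k hk => ha k (Finset.mem_of_mem_filter k hk)
    _ ≤ N * c := by gcongr

section PairEnergy

variable {α : Type*} [MeasurableSpace α] (μ : Measure α) (q : ℝ) (d : α → α → ℝ≥0∞)

noncomputable def pairEnergyAt (g : α → ℝ) (x : α) : ℝ≥0∞ :=
  ∫⁻ y, (‖g x - g y‖₊ : ℝ≥0∞) ^ q / d x y ∂μ

noncomputable def pairEnergy (g : α → ℝ) : ℝ≥0∞ :=
  ∫⁻ x, pairEnergyAt μ q d g x ∂μ

variable {μ q d}

lemma measurable_pairEnergy_integrand {g : α → ℝ} (hg : Measurable g)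
    (hd : Measurable (Function.uncurry d)) :
    Measurable (Function.uncurry fun x y => (‖g x - g y‖₊ : ℝ≥0∞) ^ q / d x y) :=
  ((((hg.comp measurable_fst).sub (hg.comp measurable_snd)).nnnorm.coe_nnreal_ennreal).pow_const
    q).div hd

lemma measurable_pairEnergyAt [SFinite μ] {g : α → ℝ} (hg : Measurable g)
    (hd : Measurable (Function.uncurry d)) : Measurable (pairEnergyAt μ q d g) :=
  (measurable_pairEnergy_integrand hg hd).lintegral_prod_right

lemma mul_sub_mul_rpow_div_le (hq : 0 ≤ q) (a a' b b' : ℝ) (t : ℝ≥0∞) :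
    (‖a * b - a' * b'‖₊ : ℝ≥0∞) ^ q / t ≤
      2 ^ q * ((‖a‖₊ : ℝ≥0∞) ^ q * ((‖b - b'‖₊ : ℝ≥0∞) ^ q / t) +
        (‖b'‖₊ : ℝ≥0∞) ^ q * ((‖a - a'‖₊ : ℝ≥0∞) ^ q / t)) := by
  have hsplit : (‖a * b - a' * b'‖₊ : ℝ≥0∞) ≤
      ‖a‖₊ * ‖b - b'‖₊ + ‖b'‖₊ * ‖a - a'‖₊ := by
    rw [show a * b - a' * b' = a * (b - b') + (a - a') * b' by ring]
    calc (‖a * (b - b') + (a - a') * b'‖₊ : ℝ≥0∞) ≤ ‖a * (b - b')‖₊ + ‖(a - a') * b'‖₊ := by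
          exact_mod_cast nnnorm_add_le _ _
      _ = ‖a‖₊ * ‖b - b'‖₊ + ‖b'‖₊ * ‖a - a'‖₊ := by
          rw [nnnorm_mul, nnnorm_mul]; push_cast; ring
  calc (‖a * b - a' * b'‖₊ : ℝ≥0∞) ^ q / t
      ≤ ((‖a‖₊ * ‖b - b'‖₊ : ℝ≥0∞) + ‖b'‖₊ * ‖a - a'‖₊) ^ q / t := by gcongr
    _ ≤ 2 ^ q * ((‖a‖₊ * ‖b - b'‖₊ : ℝ≥0∞) ^ q + (‖b'‖₊ * ‖a - a'‖₊ : ℝ≥0∞) ^ q) / t := by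
        gcongr
        exact ENNReal.add_rpow_le_two_rpow_mul _ _ hq
    _ = _ := by
        rw [ENNReal.mul_rpow_of_nonneg _ _ hq, ENNReal.mul_rpow_of_nonneg _ _ hq, mul_div_assoc,
          ENNReal.add_div, mul_div_assoc, mul_div_assoc]

lemma pairEnergyAt_mul_le (hq : 0 ≤ q) {ψ f : α → ℝ} (hψ : Measurable ψ) (hf : Measurable f)
    (hd : Measurable (Function.uncurry d)) (x : α) :
    pairEnergyAt μ q d (fun x => ψ x * f x) x ≤
      2 ^ q * ((‖ψ x‖₊ : ℝ≥0∞) ^ q * pairEnergyAt μ q d f x +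
        essSup (fun y => (‖f y‖₊ : ℝ≥0∞)) μ ^ q * pairEnergyAt μ q d ψ x) := by
  have hf_x : Measurable fun y => (‖f x - f y‖₊ : ℝ≥0∞) ^ q / d x y :=
    (measurable_pairEnergy_integrand hf hd).of_uncurry_left
  have hψ_x : Measurable fun y => (‖ψ x - ψ y‖₊ : ℝ≥0∞) ^ q / d x y :=
    (measurable_pairEnergy_integrand hψ hd).of_uncurry_left
  calc pairEnergyAt μ q d (fun x => ψ x * f x) x
      ≤ ∫⁻ y, 2 ^ q * ((‖ψ x‖₊ : ℝ≥0∞) ^ q * ((‖f x - f y‖₊ : ℝ≥0∞) ^ q / d x y) +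
          (‖f y‖₊ : ℝ≥0∞) ^ q * ((‖ψ x - ψ y‖₊ : ℝ≥0∞) ^ q / d x y)) ∂μ :=
        lintegral_mono fun y => mul_sub_mul_rpow_div_le hq (ψ x) (ψ y) (f x) (f y) (d x y)
    _ = 2 ^ q * ((‖ψ x‖₊ : ℝ≥0∞) ^ q * pairEnergyAt μ q d f x +
          ∫⁻ y, (‖f y‖₊ : ℝ≥0∞) ^ q * ((‖ψ x - ψ y‖₊ : ℝ≥0∞) ^ q / d x y) ∂μ) := by
        rw [lintegral_const_mul' _ _ (by simp), lintegral_add_left (hf_x.const_mul _),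
          lintegral_const_mul _ hf_x]
        rfl
    _ ≤ _ := by
        gcongr
        rw [pairEnergyAt, ← lintegral_const_mul _ hψ_x]
        refine lintegral_mono_ae ?_
        filter_upwards [ae_le_essSup fun y => (‖f y‖₊ : ℝ≥0∞)] with y hy
        gcongr

lemma pairEnergy_mul_le [SFinite μ] (hq : 0 ≤ q) {ψ f : α → ℝ} (hψ : Measurable ψ)
    (hf : Measurable f) (hd : Measurable (Function.uncurry d)) :
    pairEnergy μ q d (fun x => ψ x * f x) ≤
      2 ^ q * (∫⁻ x, (‖ψ x‖₊ : ℝ≥0∞) ^ q * pairEnergyAt μ q d f x ∂μ +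
        essSup (fun y => (‖f y‖₊ : ℝ≥0∞)) μ ^ q * pairEnergy μ q d ψ) :=
  calc pairEnergy μ q d (fun x => ψ x * f x)
      ≤ ∫⁻ x, 2 ^ q * ((‖ψ x‖₊ : ℝ≥0∞) ^ q * pairEnergyAt μ q d f x +
          essSup (fun y => (‖f y‖₊ : ℝ≥0∞)) μ ^ q * pairEnergyAt μ q d ψ x) ∂μ :=
        lintegral_mono (pairEnergyAt_mul_le hq hψ hf hd)
    _ = _ := by
        have hfirst : Measurable fun x => (‖ψ x‖₊ : ℝ≥0∞) ^ q * pairEnergyAt μ q d f x :=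
          (hψ.nnnorm.coe_nnreal_ennreal.pow_const q).mul (measurable_pairEnergyAt hf hd)
        rw [lintegral_const_mul' _ _ (by simp), lintegral_add_left hfirst,
          lintegral_const_mul _ (measurable_pairEnergyAt hψ hd)]
        rfl

end PairEnergy

lemma sum_nnnorm_rpow_le_of_ncard_ne_zero_le {ι : Type*} {s : Finset ι} {a : ι → ℝ} {q C : ℝ}
    {N : ℕ} (hq : 0 < q) (ha : ∀ k ∈ s, |a k| ≤ C) (hN : {k ∈ (s : Set ι) | a k ≠ 0}.ncard ≤ N) :
    ∑ k ∈ s, (‖a k‖₊ : ℝ≥0∞) ^ q ≤ N * ENNReal.ofReal C ^ q := by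
  refine ENNReal.sum_le_card_filter_ne_zero_mul (fun k hk => ?_) ?_
  · rw [← ENNReal.ofReal_coe_nnreal, coe_nnnorm, Real.norm_eq_abs]
    gcongr
    exact ha k hk
  · have hfilter : s.filter (fun k => (‖a k‖₊ : ℝ≥0∞) ^ q ≠ 0) = s.filter (a · ≠ 0) := by
      ext k
      simp [hq]
    rwa [hfilter, ← Set.ncard_coe_finset, Finset.coe_filter]

lemma sum_lintegral_le_lintegral_sum {α ι : Type*} [MeasurableSpace α] {μ : Measure α}
    (s : Finset ι) (g : ι → α → ℝ≥0∞) : ∑ k ∈ s, ∫⁻ x, g k x ∂μ ≤ ∫⁻ x, ∑ k ∈ s, g k x ∂μ := by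
  classical
  induction s using Finset.induction_on with
  | empty => simp
  | insert k s hk ih =>
      simp only [Finset.sum_insert hk]
      exact (add_le_add_right ih _).trans (le_lintegral_add _ _)

lemma sum_lintegral_nnnorm_rpow_mul_le {α ι : Type*} [MeasurableSpace α] {μ : Measure α}
    {s : Finset ι} {ψ : ι → α → ℝ} {q C : ℝ} {N : ℕ} (hq : 0 < q)
    (hψ : ∀ k ∈ s, ∀ x, |ψ k x| ≤ C) (hN : ∀ x, {k ∈ (s : Set ι) | ψ k x ≠ 0}.ncard ≤ N)
    (G : α → ℝ≥0∞) :
    ∑ k ∈ s, ∫⁻ x, (‖ψ k x‖₊ : ℝ≥0∞) ^ q * G x ∂μ ≤ N * ENNReal.ofReal C ^ q * ∫⁻ x, G x ∂μ :=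
  calc ∑ k ∈ s, ∫⁻ x, (‖ψ k x‖₊ : ℝ≥0∞) ^ q * G x ∂μ
      ≤ ∫⁻ x, (∑ k ∈ s, (‖ψ k x‖₊ : ℝ≥0∞) ^ q) * G x ∂μ := by
        simp only [Finset.sum_mul]
        exact sum_lintegral_le_lintegral_sum s _
    _ ≤ ∫⁻ x, N * ENNReal.ofReal C ^ q * G x ∂μ := by
        gcongr with x
        exact sum_nnnorm_rpow_le_of_ncard_ne_zero_le hq (fun k hk => hψ k hk x) (hN x)
    _ = N * ENNReal.ofReal C ^ q * ∫⁻ x, G x ∂μ :=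
        lintegral_const_mul' _ _
          (mul_ne_top (natCast_ne_top N) (rpow_ne_top_of_nonneg hq.le ofReal_ne_top))

lemma gagliardoQ_eq_pairEnergy {m : ℕ} (q r : ℝ) (Ω : Set (EuclideanSpace ℝ (Fin m)))
    (g : EuclideanSpace ℝ (Fin m) → ℝ) :
    gagliardoQ q r Ω g =
      pairEnergy (volume.restrict Ω) q
        (fun x y => ENNReal.ofReal (dist x y) ^ ((m : ℝ) + r * q)) g :=
  rfl

theorem statement16_general {m : ℕ} (Ω : Set (EuclideanSpace ℝ (Fin m)))
    (q r : ℝ) (hq : 1 ≤ q)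
    (C K₀ : ℝ) (K₁ N₀ : ℕ)
    {ι : Type*} (𝒦 : Finset ι) (hcard : 𝒦.card ≤ K₁)
    (ψ : ι → EuclideanSpace ℝ (Fin m) → ℝ)
    (hψmeas : ∀ k ∈ 𝒦, Measurable (ψ k))
    (hψbd : ∀ k ∈ 𝒦, ∀ x, |ψ k x| ≤ C)
    (hψgag : ∀ k ∈ 𝒦, gagliardoQ q r Ω (ψ k) ≤ ENNReal.ofReal K₀)
    (hover : ∀ x, {k ∈ (𝒦 : Set ι) | ψ k x ≠ 0}.ncard ≤ N₀)
    (f : EuclideanSpace ℝ (Fin m) → ℝ) (hfmeas : Measurable f) :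
    ∑ k ∈ 𝒦, gagliardoQ q r Ω (fun x => ψ k x * f x) ≤
      (2 : ℝ≥0∞) ^ q *
        ((N₀ : ℝ≥0∞) * ENNReal.ofReal C ^ q * gagliardoQ q r Ω f +
          (K₁ : ℝ≥0∞) * ENNReal.ofReal K₀ *
            (essSup (fun x => (‖f x‖₊ : ℝ≥0∞)) (volume.restrict Ω)) ^ q) := by
  have hq_pos : 0 < q := zero_lt_one.trans_le hq
  simp only [gagliardoQ_eq_pairEnergy] at hψgag ⊢
  set μ := volume.restrict Ω
  set d : EuclideanSpace ℝ (Fin m) → EuclideanSpace ℝ (Fin m) → ℝ≥0∞ :=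
    fun x y => ENNReal.ofReal (dist x y) ^ ((m : ℝ) + r * q)
  set M := essSup (fun x => (‖f x‖₊ : ℝ≥0∞)) μ
  have hd : Measurable (Function.uncurry d) := measurable_dist.ennreal_ofReal.pow_const _
  calc ∑ k ∈ 𝒦, pairEnergy μ q d (fun x => ψ k x * f x)
      ≤ ∑ k ∈ 𝒦, 2 ^ q * (∫⁻ x, (‖ψ k x‖₊ : ℝ≥0∞) ^ q * pairEnergyAt μ q d f x ∂μ +
          M ^ q * pairEnergy μ q d (ψ k)) :=
        Finset.sum_le_sum fun k hk => pairEnergy_mul_le hq_pos.le (hψmeas k hk) hfmeas hd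
    _ = 2 ^ q * (∑ k ∈ 𝒦, ∫⁻ x, (‖ψ k x‖₊ : ℝ≥0∞) ^ q * pairEnergyAt μ q d f x ∂μ +
          ∑ k ∈ 𝒦, M ^ q * pairEnergy μ q d (ψ k)) := by
        rw [← Finset.mul_sum, Finset.sum_add_distrib]
    _ ≤ _ := by
        gcongr 2 ^ q * (?_ + ?_)
        · exact sum_lintegral_nnnorm_rpow_mul_le hq_pos hψbd hover _
        · calc ∑ k ∈ 𝒦, M ^ q * pairEnergy μ q d (ψ k)
              ≤ 𝒦.card • (M ^ q * ENNReal.ofReal K₀) :=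
                Finset.sum_le_card_nsmul _ _ _ fun k hk => by gcongr; exact hψgag k hk
            _ ≤ K₁ * ENNReal.ofReal K₀ * M ^ q := by
                rw [nsmul_eq_mul, mul_comm (M ^ q), ← mul_assoc]
                gcongr

theorem statement16 {m : ℕ} (Ω : Set (EuclideanSpace ℝ (Fin m))) (hΩ : MeasurableSet Ω)
    (q r : ℝ) (hq : 1 ≤ q) (hr0 : 0 < r) (hr1 : r < 1)
    (C K₀ : ℝ) (hC : 0 < C) (hK₀ : 0 ≤ K₀) (K₁ N₀ : ℕ) (hN₀ : 1 ≤ N₀)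
    {ι : Type*} (𝒦 : Finset ι) (hcard : 𝒦.card ≤ K₁)
    (ψ : ι → EuclideanSpace ℝ (Fin m) → ℝ)
    (hψmeas : ∀ k ∈ 𝒦, Measurable (ψ k))
    (hψbd : ∀ k ∈ 𝒦, ∀ x, |ψ k x| ≤ C)
    (hψgag : ∀ k ∈ 𝒦, gagliardoQ q r Ω (ψ k) ≤ ENNReal.ofReal K₀)
    (hover : ∀ x, {k ∈ (𝒦 : Set ι) | ψ k x ≠ 0}.ncard ≤ N₀)
    (f : EuclideanSpace ℝ (Fin m) → ℝ) (hfmeas : Measurable f)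
    (hfbd : ∃ D : ℝ, ∀ x, |f x| ≤ D)
    (hfgag : gagliardoQ q r Ω f < ⊤) :
    ∑ k ∈ 𝒦, gagliardoQ q r Ω (fun x => ψ k x * f x) ≤
      (2 : ℝ≥0∞) ^ q *
        ((N₀ : ℝ≥0∞) * ENNReal.ofReal C ^ q * gagliardoQ q r Ω f +
          (K₁ : ℝ≥0∞) * ENNReal.ofReal K₀ *
            (essSup (fun x => (‖f x‖₊ : ℝ≥0∞)) (volume.restrict Ω)) ^ q) :=
  statement16_general Ω q r hq C K₀ K₁ N₀ 𝒦 hcard ψ hψmeas hψbd hψgag hover f hfmeas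
end
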